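/- arXiv:1704.02450 — 2 statements merged into one kernel-verified Lean document; each statement's English description precedes it below -/
import Mathlib

section
/- For every n×n real positive semidefinite matrix A and every n×n real positive definite matrix Γ, one has tr(Γ⁻¹ A) + tr(Γ) ≥ 2 tr(A^{1/2}). -/
/-!
Write `B = A^{1/2}`. Since `Γ⁻¹` is positive definite and `B - Γ` is Hermitian,
`(B - Γ) Γ⁻¹ (B - Γ)` is positive semidefinite, so its trace is nonnegative. Expanding it and
cycling the trace gives `tr (Γ⁻¹ A) - 2 tr B + tr Γ`.
-/

open Matrix
open scoped ComplexOrder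

noncomputable def Matrix.PosSemidef.sqrt {n : Type*} [Fintype n] [DecidableEq n]
    {𝕜 : Type*} [RCLike 𝕜] {A : Matrix n n 𝕜} (hA : A.PosSemidef) : Matrix n n 𝕜 :=
  hA.1.eigenvectorUnitary.1 * diagonal ((↑) ∘ (√·) ∘ hA.1.eigenvalues) *
    (star hA.1.eigenvectorUnitary : Matrix n n 𝕜)

variable {n 𝕜 : Type*} [Fintype n] [DecidableEq n] [RCLike 𝕜]

namespace Matrix.PosSemidef

theorem posSemidef_sqrt {A : Matrix n n 𝕜} (hA : A.PosSemidef) : hA.sqrt.PosSemidef := by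
  have hD : (diagonal ((↑) ∘ (√·) ∘ hA.1.eigenvalues) : Matrix n n 𝕜).PosSemidef :=
    posSemidef_diagonal_iff.mpr fun i => by simp [Real.sqrt_nonneg]
  unfold sqrt
  simpa [star_eq_conjTranspose] using
    hD.mul_mul_conjTranspose_same (hA.1.eigenvectorUnitary : Matrix n n 𝕜)

theorem sqrt_mul_self {A : Matrix n n 𝕜} (hA : A.PosSemidef) : hA.sqrt * hA.sqrt = A := by
  set U : Matrix n n 𝕜 := hA.1.eigenvectorUnitary.1
  set S : Matrix n n 𝕜 := diagonal ((↑) ∘ (√·) ∘ hA.1.eigenvalues)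
  have hU : star U * U = 1 := Unitary.coe_star_mul_self _
  have hSS : S * S = diagonal ((↑) ∘ hA.1.eigenvalues) := by
    rw [diagonal_mul_diagonal]
    congr 1
    funext i
    simp [← RCLike.ofReal_mul, Real.mul_self_sqrt (hA.eigenvalues_nonneg i)]
  calc hA.sqrt * hA.sqrt = U * (S * (star U * U) * S) * star U := by
        simp only [sqrt, U, S, Matrix.mul_assoc]
    _ = A := by
        rw [hU, Matrix.mul_one, hSS]
        conv_rhs => rw [hA.1.spectral_theorem]
        simp [Matrix.mul_assoc, U]

end Matrix.PosSemidef

theorem Matrix.trace_sub_mul_inv_mul_sub {B Γ : Matrix n n 𝕜} (hΓ : IsUnit Γ) :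
    ((B - Γ) * Γ⁻¹ * (B - Γ)).trace = (Γ⁻¹ * (B * B)).trace - 2 * B.trace + Γ.trace := by
  have hΓ' : IsUnit Γ.det := (isUnit_iff_isUnit_det Γ).mp hΓ
  have hexpand : (B - Γ) * Γ⁻¹ * (B - Γ) =
      B * Γ⁻¹ * B - B * (Γ⁻¹ * Γ) - (Γ * Γ⁻¹) * B + Γ * Γ⁻¹ * Γ := by
    noncomm_ring
  have hcycle : (Γ⁻¹ * (B * B)).trace = (B * Γ⁻¹ * B).trace := by
    rw [← Matrix.mul_assoc, trace_mul_cycle]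
  rw [hexpand, mul_nonsing_inv Γ hΓ', nonsing_inv_mul Γ hΓ', hcycle]
  simp only [trace_add, trace_sub, Matrix.mul_one, Matrix.one_mul]
  ring

theorem Matrix.two_mul_trace_le_trace_inv_mul_mul_self_add_trace {B Γ : Matrix n n 𝕜}
    (hB : B.IsHermitian) (hΓ : Γ.PosDef) :
    2 * B.trace ≤ (Γ⁻¹ * (B * B)).trace + Γ.trace := by
  have hpsd : ((B - Γ) * Γ⁻¹ * (B - Γ)).PosSemidef := by
    simpa [(hB.sub hΓ.isHermitian).eq] using
      hΓ.posSemidef.inv.mul_mul_conjTranspose_same (B - Γ)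
  have := hpsd.trace_nonneg
  rw [trace_sub_mul_inv_mul_sub hΓ.isUnit] at this
  calc 2 * B.trace ≤ 2 * B.trace + ((Γ⁻¹ * (B * B)).trace - 2 * B.trace + Γ.trace) :=
        le_add_of_nonneg_right this
    _ = (Γ⁻¹ * (B * B)).trace + Γ.trace := by ring

/-- **Matrix AM–GM inequality** (Lemma 1 of the paper, lower-bound form for a PSD matrix):
for every `n × n` real positive semidefinite matrix `A` and every positive definite `Γ`,
`tr (Γ⁻¹ * A) + tr Γ ≥ 2 * tr (A ^ (1/2))`, where `A ^ (1/2)` is the unique positive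
semidefinite square root of `A`. -/
theorem trace_inv_mul_add_trace_ge_two_trace_sqrt
    {n : ℕ} (A Γ : Matrix (Fin n) (Fin n) ℝ)
    (hA : A.PosSemidef) (hΓ : Γ.PosDef) :
    (Γ⁻¹ * A).trace + Γ.trace ≥ 2 * hA.sqrt.trace := by
  have := two_mul_trace_le_trace_inv_mul_mul_self_add_trace hA.posSemidef_sqrt.isHermitian hΓ
  rwa [hA.sqrt_mul_self] at this
end

section
/- Let M be a real m×n matrix such that M Mᵀ is positive definite. Then tr((M Mᵀ)^{1/2}) is the least element of the set { ½ (tr(Mᵀ Γ⁻¹ M) + tr(Γ)) : Γ an m×m real positive definite matrix }. -/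
open Matrix
open scoped MatrixOrder

/-!
With `S = (M Mᵀ)^{1/2}` one has `tr (Mᵀ Γ⁻¹ M) = tr (S Γ⁻¹ S)` by cyclicity of the trace, and
completing the square gives `tr (S Γ⁻¹ S) - 2 tr S + tr Γ = tr ((S - Γ) Γ⁻¹ (S - Γ)) ≥ 0`,
with equality at `Γ = S`.
-/

namespace Matrix

variable {ι : Type*} [Fintype ι]

theorem trace_transpose_mul_mul_eq_of_mul_self_eq {R κ : Type*} [CommRing R] [Fintype κ]
    {M : Matrix ι κ R} {S : Matrix ι ι R} (hS : S * S = M * Mᵀ) (A : Matrix ι ι R) :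
    (Mᵀ * A * M).trace = (S * A * S).trace := by
  calc (Mᵀ * A * M).trace = (A * (M * Mᵀ)).trace := by
        rw [trace_mul_comm (Mᵀ * A), ← Matrix.mul_assoc, trace_mul_comm]
    _ = (S * A * S).trace := by
        rw [← hS, ← Matrix.mul_assoc, trace_mul_comm, Matrix.mul_assoc]

open scoped ComplexOrder in
theorem two_mul_trace_le_trace_mul_inv_mul_add_trace [DecidableEq ι] {𝕜 : Type*} [RCLike 𝕜]
    {S Γ : Matrix ι ι 𝕜} (hS : S.IsHermitian) (hΓ : Γ.PosDef) :
    2 * S.trace ≤ (S * Γ⁻¹ * S).trace + Γ.trace := by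
  have hΓdet : IsUnit Γ.det := (isUnit_iff_isUnit_det Γ).mp hΓ.isUnit
  have hsquare : ((S - Γ) * Γ⁻¹ * (S - Γ)ᴴ).PosSemidef :=
    hΓ.inv.posSemidef.mul_mul_conjTranspose_same (S - Γ)
  have hexpand : (S - Γ) * Γ⁻¹ * (S - Γ)ᴴ = S * Γ⁻¹ * S - S - S + Γ := by
    rw [conjTranspose_sub, hS.eq, hΓ.isHermitian.eq]
    calc (S - Γ) * Γ⁻¹ * (S - Γ)
        = S * Γ⁻¹ * S - S * (Γ⁻¹ * Γ) - (Γ * Γ⁻¹) * S + Γ * Γ⁻¹ * Γ := by noncomm_ring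
      _ = S * Γ⁻¹ * S - S - S + Γ := by
        rw [nonsing_inv_mul Γ hΓdet, mul_nonsing_inv Γ hΓdet, Matrix.mul_one,
          Matrix.one_mul, Matrix.one_mul]
  have htrace := hsquare.trace_nonneg
  rw [hexpand, trace_add, trace_sub, trace_sub] at htrace
  rw [two_mul, ← sub_nonneg]
  convert htrace using 1
  abel

end Matrix

/-- Lemma 1 of the paper, combined form: if `M Mᵀ` is positive definite, then
`tr ((M Mᵀ) ^ (1/2))` (the trace norm of `M`) is the least element of the set of values
`½ (tr (Mᵀ Γ⁻¹ M) + tr Γ)` as `Γ` ranges over the `m × m` real positive definite matrices. -/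
theorem isLeast_trace_norm_variational
    {m n : ℕ} (M : Matrix (Fin m) (Fin n) ℝ) (h : (M * Mᵀ).PosDef) :
    IsLeast {x : ℝ | ∃ Γ : Matrix (Fin m) (Fin m) ℝ, Γ.PosDef ∧
        x = (1 / 2 : ℝ) * ((Mᵀ * Γ⁻¹ * M).trace + Γ.trace)}
      (CFC.sqrt (M * Mᵀ)).trace := by
  set S := CFC.sqrt (M * Mᵀ)
  have hS : S.PosDef := (IsStrictlyPositive.sqrt _ h.isStrictlyPositive).posDef
  have hSS : S * S = M * Mᵀ := CFC.sqrt_mul_sqrt_self _ h.posSemidef.nonneg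
  constructor
  · refine ⟨S, hS, ?_⟩
    rw [trace_transpose_mul_mul_eq_of_mul_self_eq hSS,
      nonsing_inv_mul_cancel_right _ _ ((isUnit_iff_isUnit_det S).mp hS.isUnit)]
    ring
  · rintro x ⟨Γ, hΓ, rfl⟩
    rw [trace_transpose_mul_mul_eq_of_mul_self_eq hSS]
    linarith [two_mul_trace_le_trace_mul_inv_mul_add_trace hS.isHermitian hΓ]
end
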